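/- arXiv:1901.03843 — 9 statements merged into one kernel-verified Lean document; each statement's English description precedes it below -/
import Mathlib

section
/- In the high-transfer-price setting, suppose additionally that Δp* ≤ p^∨ − p̄ (i.e. the maximising share ((τ₂−τ₁)/((1−exp(−λ))·(1+z)·τ₂·(1+1/γ)))^γ is at most 1). Then the expected-net-profit function E is strictly concave on [p̄, p^∨], its derivative vanishes at p* = p̄ + Δp*, and p* is the unique maximiser of E on the interval [p̄, p^∨]. -/
open Real Set Filter Topology

/-! On `[p̄, ∞)` the penalty term equals `c · (p − p̄) ^ (1 + 1/γ)` with `c > 0`, so `E` is a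
linear function minus a strictly convex power and hence strictly concave there. Its derivative
`(τ₂ − τ₁) m − c (1 + 1/γ) (p − p̄) ^ (1/γ)` vanishes exactly at `p̄ + Δp*`, an interior point of
`[p̄, ∞)` even when `Δp* = p^∨ − p̄`, so concavity makes it the unique maximiser on `[p̄, ∞)` and a
fortiori on `[p̄, p^∨]`. -/

theorem strictConcaveOn_add_mul_sub_mul_rpow {c s : ℝ} (K a x₀ : ℝ) (hc : 0 < c) (hs : 1 < s) :
    StrictConcaveOn ℝ (Ici x₀) fun x => K + a * x - c * (x - x₀) ^ s := by
  have hpow : StrictConvexOn ℝ (Ici x₀) fun x => (x - x₀) ^ s := by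
    simpa [Function.comp_def, sub_eq_neg_add] using
      (strictConvexOn_rpow hs).translate_right (-x₀)
  have hcpow : StrictConvexOn ℝ (Ici x₀) fun x => c * (x - x₀) ^ s :=
    ⟨hpow.1, fun x hx y hy hxy a b ha hb hab => by
      simpa [smul_eq_mul, mul_add, mul_left_comm c] using
        mul_lt_mul_of_pos_left (hpow.2 hx hy hxy ha hb hab) hc⟩
  have hlin : ConcaveOn ℝ (Ici x₀) fun x => K + a * x :=
    ((LinearMap.mulLeft ℝ a).concaveOn (convex_Ici x₀)).add_const K |>.congr fun x _ => by
      simp [add_comm]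
  exact hlin.sub_strictConvexOn hcpow

theorem hasDerivAt_add_mul_sub_mul_rpow {s : ℝ} (K a c x₀ x : ℝ) (hs : 1 ≤ s) :
    HasDerivAt (fun x => K + a * x - c * (x - x₀) ^ s) (a - c * (s * (x - x₀) ^ (s - 1))) x := by
  have hpow := (hasDerivAt_rpow_const (x := x - x₀) (Or.inr hs)).comp x
    ((hasDerivAt_id x).sub_const x₀)
  exact (((hasDerivAt_id x).const_mul a).const_add K).sub (hpow.const_mul c)
    |>.congr_deriv (by simp)

theorem ConcaveOn.isMaxOn_of_hasDerivAt_eq_zero {S : Set ℝ} {f : ℝ → ℝ} {x : ℝ}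
    (hf : ConcaveOn ℝ S f) (hx : x ∈ interior S) (hd : HasDerivAt f 0 x) : IsMaxOn f S x := by
  have hmin := hf.neg.isMinOn_of_rightDeriv_eq_zero hx <| by
    simpa using hd.neg.hasDerivWithinAt.derivWithin (uniqueDiffWithinAt_Ioi x)
  exact fun y hy => neg_le_neg_iff.mp (show -f x ≤ -f y from hmin hy)

theorem eqOn_add_mul_sub_mul_div_rpow (K a b : ℝ) {x₀ L r : ℝ} (hL : 0 ≤ L) (hr : 0 ≤ r) :
    EqOn (fun p => K + a * p - b * (p - x₀) * ((p - x₀) / L) ^ r)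
      (fun p => K + a * p - b / L ^ r * (p - x₀) ^ (1 + r)) (Ici x₀) :=
    fun p (hp : x₀ ≤ p) => by
  have hu : 0 ≤ p - x₀ := sub_nonneg.mpr hp
  dsimp only
  rw [div_rpow hu hL, rpow_one_add' hu (by positivity)]
  ring

theorem hasDerivAt_add_mul_sub_div_rpow_eq_zero {a b L γ : ℝ} (K x₀ : ℝ) (ha : 0 ≤ a)
    (hb : 0 < b) (hL : 0 < L) (hγ : 0 < γ) :
    HasDerivAt (fun p => K + a * p - b / L ^ (1 / γ) * (p - x₀) ^ (1 + 1 / γ)) 0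
      (x₀ + (a / (b * (1 + 1 / γ))) ^ γ * L) := by
  convert hasDerivAt_add_mul_sub_mul_rpow (s := 1 + 1 / γ) K a (b / L ^ (1 / γ)) x₀ _
    (le_add_of_nonneg_right (by positivity)) using 1
  have hcrit :
      ((a / (b * (1 + 1 / γ))) ^ γ * L) ^ (1 / γ) = a / (b * (1 + 1 / γ)) * L ^ (1 / γ) := by
    rw [mul_rpow (by positivity) hL.le, ← rpow_mul (by positivity), mul_one_div_cancel hγ.ne',
      rpow_one]
  rw [add_sub_cancel_left, add_sub_cancel_left, hcrit]
  field_simp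
  ring

theorem stmt0_general (τ₁ τ₂ lam z γ pbar pvee m K : ℝ)
    (hτ₁ : 0 ≤ τ₁) (hττ : τ₁ < τ₂)
    (hlam : 0 < lam) (hz : 0 < z) (hγ : γ ∈ Set.Ioc (0 : ℝ) 1)
    (hp : pbar < pvee) (hm : 0 < m)
    (Δp : ℝ)
    (hΔp : Δp = ((τ₂ - τ₁) / ((1 - Real.exp (-lam)) * (1 + z) * τ₂ * (1 + 1 / γ))) ^ γ *
      (pvee - pbar))
    (hle : Δp ≤ pvee - pbar)
    (pstar : ℝ) (hpstar : pstar = pbar + Δp)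
    (E : ℝ → ℝ)
    (hE : E = fun p => K + (τ₂ - τ₁) * m * p -
      (1 - Real.exp (-lam)) * (1 + z) * τ₂ * m * (p - pbar) *
        ((p - pbar) / (pvee - pbar)) ^ (1 / γ)) :
    StrictConcaveOn ℝ (Set.Icc pbar pvee) E ∧
    deriv E pstar = 0 ∧
    pstar ∈ Set.Icc pbar pvee ∧
    (∀ p ∈ Set.Icc pbar pvee, E p ≤ E pstar) ∧
    (∀ p ∈ Set.Icc pbar pvee, E p = E pstar → p = pstar) := by
  obtain ⟨hγ, -⟩ := hγ
  set A := τ₂ - τ₁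
  set B := (1 - exp (-lam)) * (1 + z) * τ₂
  set L := pvee - pbar
  have hB : 0 < B := by
    have : exp (-lam) < 1 := exp_lt_one_iff.mpr (neg_lt_zero.mpr hlam)
    have : 0 < 1 - exp (-lam) := by linarith
    have : 0 < τ₂ := hτ₁.trans_lt hττ
    positivity
  have hA : 0 < A := sub_pos.mpr hττ
  have hL : 0 < L := sub_pos.mpr hp
  set F := fun p => K + A * m * p - B * m / L ^ (1 / γ) * (p - pbar) ^ (1 + 1 / γ)
  have hEF : EqOn E F (Ici pbar) := hE ▸ eqOn_add_mul_sub_mul_div_rpow K _ _ hL.le (by positivity)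
  have hFconc : StrictConcaveOn ℝ (Ici pbar) F := strictConcaveOn_add_mul_sub_mul_rpow K _ pbar
    (by positivity) (lt_add_of_pos_right 1 (by positivity))
  have hFderiv : HasDerivAt F 0 pstar := by
    have h := hasDerivAt_add_mul_sub_div_rpow_eq_zero (a := A * m) K pbar (by positivity)
      (mul_pos hB hm) hL hγ
    rwa [mul_right_comm B, mul_div_mul_right _ _ hm.ne', ← hΔp, ← hpstar] at h
  have hpbar_lt : pbar < pstar := hpstar ▸ lt_add_of_pos_right pbar (hΔp ▸ by positivity)
  have hpstar_mem : pstar ∈ Icc pbar pvee := ⟨hpbar_lt.le, by linarith⟩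
  have hEconc : StrictConcaveOn ℝ (Icc pbar pvee) E :=
    (hFconc.subset Icc_subset_Ici_self (convex_Icc _ _)).congr (hEF.mono Icc_subset_Ici_self).symm
  have hEmax : IsMaxOn E (Icc pbar pvee) pstar := by
    have hFmax := hFconc.concaveOn.isMaxOn_of_hasDerivAt_eq_zero (by rwa [interior_Ici]) hFderiv
    exact (hFmax.on_subset Icc_subset_Ici_self).congr
      (eventuallyEq_principal.mpr (hEF.mono Icc_subset_Ici_self).symm) (hEF hpbar_lt.le).symm
  refine ⟨hEconc, ?_, hpstar_mem, fun p hp => hEmax hp, fun p hp hEp => ?_⟩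
  · rw [(hEF.eventuallyEq_of_mem (Ici_mem_nhds hpbar_lt)).deriv_eq, hFderiv.deriv]
  · exact hEconc.eq_of_isMaxOn (fun q hq => hEp ▸ hEmax hq) hEmax hp hpstar_mem

/-- In the high-transfer-price setting, if the optimal price gap `Δp*` is at most
`p^∨ − p̄`, then the expected-net-profit function `E` is strictly concave on `[p̄, p^∨]`,
its derivative vanishes at `p* = p̄ + Δp*`, and `p*` is the unique maximiser of `E`
on `[p̄, p^∨]`. -/
theorem stmt0 (τ₁ τ₂ lam z γ pbar pvee m K : ℝ)
    (hτ₁ : 0 ≤ τ₁) (hτ₂ : τ₂ ≤ 1) (hττ : τ₁ < τ₂)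
    (hlam : 0 < lam) (hz : 0 < z) (hγ : γ ∈ Set.Ioc (0 : ℝ) 1)
    (hp : pbar < pvee) (hm : 0 < m)
    (Δp : ℝ)
    (hΔp : Δp = ((τ₂ - τ₁) / ((1 - Real.exp (-lam)) * (1 + z) * τ₂ * (1 + 1 / γ))) ^ γ *
      (pvee - pbar))
    (hle : Δp ≤ pvee - pbar)
    (pstar : ℝ) (hpstar : pstar = pbar + Δp)
    (E : ℝ → ℝ)
    (hE : E = fun p => K + (τ₂ - τ₁) * m * p -
      (1 - Real.exp (-lam)) * (1 + z) * τ₂ * m * (p - pbar) *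
        ((p - pbar) / (pvee - pbar)) ^ (1 / γ)) :
    StrictConcaveOn ℝ (Set.Icc pbar pvee) E ∧
    deriv E pstar = 0 ∧
    pstar ∈ Set.Icc pbar pvee ∧
    (∀ p ∈ Set.Icc pbar pvee, E p ≤ E pstar) ∧
    (∀ p ∈ Set.Icc pbar pvee, E p = E pstar → p = pstar) :=
  stmt0_general τ₁ τ₂ lam z γ pbar pvee m K hτ₁ hττ hlam hz hγ hp hm Δp hΔp hle pstar hpstar E hE
end

section
/- In the high-transfer-price setting, the gain from profit shifting at the optimal transfer price satisfies E(p*) − E(p̄) = (τ₂−τ₁)·Δp*·m·(1/(1+γ)), and this quantity is strictly positive. -/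
open Real Set Filter Topology

/-- In the high-transfer-price setting, the gain from profit shifting at the optimal
transfer price satisfies `E(p*) − E(p̄) = (τ₂−τ₁)·Δp*·m·(1/(1+γ))`, and this quantity
is strictly positive. -/
theorem stmt1 (τ₁ τ₂ lam z γ pbar pvee m K : ℝ)
    (hτ₁ : 0 ≤ τ₁) (hτ₂ : τ₂ ≤ 1) (hττ : τ₁ < τ₂)
    (hlam : 0 < lam) (hz : 0 < z) (hγ : γ ∈ Set.Ioc (0 : ℝ) 1)
    (hp : pbar < pvee) (hm : 0 < m)
    (Δp : ℝ)
    (hΔp : Δp = ((τ₂ - τ₁) / ((1 - Real.exp (-lam)) * (1 + z) * τ₂ * (1 + 1 / γ))) ^ γ *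
      (pvee - pbar))
    (pstar : ℝ) (hpstar : pstar = pbar + Δp)
    (E : ℝ → ℝ)
    (hE : E = fun p => K + (τ₂ - τ₁) * m * p -
      (1 - Real.exp (-lam)) * (1 + z) * τ₂ * m * (p - pbar) *
        ((p - pbar) / (pvee - pbar)) ^ (1 / γ)) :
    E pstar - E pbar = (τ₂ - τ₁) * Δp * m * (1 / (1 + γ)) ∧
    0 < (τ₂ - τ₁) * Δp * m * (1 / (1 + γ)) := by
  obtain ⟨hγ0, hγ1⟩ := hγ
  have hexp : Real.exp (-lam) < 1 := by
    rw [Real.exp_lt_one_iff]; linarith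
  have hτ2 : 0 < τ₂ := lt_of_le_of_lt hτ₁ hττ
  have hCpos : 0 < (1 - Real.exp (-lam)) * (1 + z) * τ₂ :=
    mul_pos (mul_pos (by linarith) (by linarith)) hτ2
  set C := (1 - Real.exp (-lam)) * (1 + z) * τ₂ with hC
  have hApos : 0 < (τ₂ - τ₁) / (C * (1 + 1 / γ)) := by
    apply div_pos (by linarith)
    apply mul_pos hCpos
    have : 0 < 1 / γ := by positivity
    linarith
  set A := (τ₂ - τ₁) / (C * (1 + 1 / γ)) with hA
  have hΔp' : Δp = A ^ γ * (pvee - pbar) := hΔp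
  have hΔppos : 0 < Δp := by
    rw [hΔp']
    exact mul_pos (Real.rpow_pos_of_pos hApos γ) (by linarith)
  have hpv : pvee - pbar ≠ 0 := by linarith
  have hratio : Δp / (pvee - pbar) = A ^ γ := by
    rw [hΔp']; field_simp
  have hrpow : (Δp / (pvee - pbar)) ^ (1 / γ) = A := by
    rw [hratio, ← Real.rpow_mul hApos.le, mul_one_div_cancel hγ0.ne', Real.rpow_one]
  have hCA : C * A * (1 + γ) = (τ₂ - τ₁) * γ := by
    rw [hA]
    field_simp
    ring
  have h1γ : (1 : ℝ) + γ ≠ 0 := by positivity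
  constructor
  · subst hE hpstar
    simp only [add_sub_cancel_left, sub_self, hrpow]
    have h0 : ((0 : ℝ) / (pvee - pbar)) ^ (1 / γ) = 0 := by
      rw [zero_div, Real.zero_rpow (by positivity : (1:ℝ)/γ ≠ 0)]
    rw [h0]
    field_simp
    linear_combination (-(m * Δp)) * hCA
  · have : 0 < 1 / (1 + γ) := by positivity
    have h1 : 0 < τ₂ - τ₁ := by linarith
    positivity
end

section
/- Let τ > 0, z > 0, γ ∈ (0,1], and let Δτ > 0 satisfy Δτ < (1+z)·τ·(1+1/γ). Then for every λ > 0, the inequality (Δτ/((1−exp(−λ))·(1+z)·τ·(1+1/γ)))^γ ≤ 1 holds if and only if λ ≥ −log(1 − Δτ/((1+z)·τ·(1+1/γ))). (Equivalently, the optimal transfer price is an α-cut of the fuzzy arm's-length price, i.e. |Δp*| ≤ |p^c − p̄^c|, exactly when the audit intensity λ meets this threshold.) -/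
open Real Set Filter Topology

/-- For `τ > 0`, `z > 0`, `γ ∈ (0,1]` and `0 < Δτ < (1+z)·τ·(1+1/γ)`, and every `λ > 0`,
the maximising share `(Δτ/((1−exp(−λ))·(1+z)·τ·(1+1/γ)))^γ` is at most `1` if and only
if `λ ≥ −log(1 − Δτ/((1+z)·τ·(1+1/γ)))`. -/
theorem stmt2 (Δτ τ z γ : ℝ)
    (hτ : 0 < τ) (hz : 0 < z) (hγ : γ ∈ Set.Ioc (0 : ℝ) 1)
    (hΔτ : 0 < Δτ) (hΔτ' : Δτ < (1 + z) * τ * (1 + 1 / γ)) :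
    ∀ lam > (0 : ℝ),
      ((Δτ / ((1 - Real.exp (-lam)) * (1 + z) * τ * (1 + 1 / γ))) ^ γ ≤ 1 ↔
        lam ≥ -Real.log (1 - Δτ / ((1 + z) * τ * (1 + 1 / γ)))) := by
  obtain ⟨hγ0, hγ1⟩ := hγ
  intro lam hlam
  set D : ℝ := (1 + z) * τ * (1 + 1 / γ) with hD
  have hDpos : 0 < D := by
    have : 0 < 1 + 1 / γ := by positivity
    positivity
  have hs : 0 < 1 - Real.exp (-lam) := by
    have : Real.exp (-lam) < 1 := Real.exp_lt_one_iff.mpr (by linarith)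
    linarith
  have hbpos : 0 < Δτ / ((1 - Real.exp (-lam)) * D) := by positivity
  have h1 : 1 - Δτ / D > 0 := by
    rw [gt_iff_lt, sub_pos, div_lt_one hDpos]; exact hΔτ'
  have key : (Δτ / ((1 - Real.exp (-lam)) * D)) ^ γ ≤ 1 ↔
      Δτ / ((1 - Real.exp (-lam)) * D) ≤ 1 := by
    rw [Real.rpow_le_one_iff_of_pos hbpos]
    constructor
    · rintro (⟨_, h⟩ | ⟨h, _⟩)
      · linarith
      · exact h
    · intro h; exact Or.inr ⟨h, le_of_lt hγ0⟩
  rw [show (1 - Real.exp (-lam)) * (1 + z) * τ * (1 + 1 / γ)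
      = (1 - Real.exp (-lam)) * D by ring, key,
    div_le_one (by positivity)]
  rw [ge_iff_le, neg_le, Real.le_log_iff_exp_le h1]
  constructor
  · intro h
    have : Δτ / D ≤ 1 - Real.exp (-lam) := by
      rw [div_le_iff₀ hDpos]; linarith [h]
    linarith
  · intro h
    have : Δτ / D ≤ 1 - Real.exp (-lam) := by linarith
    have := (div_le_iff₀ hDpos).mp this
    linarith
end

section
/- In the high-transfer-price setting with τ₂ > 0, if the audit intensity is below the threshold of Proposition 2, i.e. λ < −log(1 − (τ₂−τ₁)/((1+z)·τ₂·(1+1/γ))) (where (τ₂−τ₁)/((1+z)·τ₂·(1+1/γ)) < 1), then (τ₂−τ₁) > (1−exp(−λ))·(1+z)·τ₂, so the crisp expected-net-profit function p ↦ K + (τ₂−τ₁)·m·p − (1−exp(−λ))·(1+z)·τ₂·m·(p−p̄) is strictly increasing in p and tends to +∞ as p → +∞; in particular it has no maximiser on ℝ. -/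
open Real Set Filter Topology

/-- In the high-transfer-price setting with `τ₂ > 0`, if the audit intensity is below
the threshold `−log(1 − (τ₂−τ₁)/((1+z)·τ₂·(1+1/γ)))`, then
`(τ₂−τ₁) > (1−exp(−λ))·(1+z)·τ₂`, so the crisp expected-net-profit function is strictly
increasing, tends to `+∞` at `+∞`, and has no maximiser on `ℝ`. -/
theorem stmt3 (τ₁ τ₂ lam z γ pbar m K : ℝ)
    (hτ₁ : 0 ≤ τ₁) (hτ₂ : τ₂ ≤ 1) (hττ : τ₁ < τ₂) (hτ₂pos : 0 < τ₂)
    (hlam : 0 < lam) (hz : 0 < z) (hγ : γ ∈ Set.Ioc (0 : ℝ) 1) (hm : 0 < m)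
    (hfrac : (τ₂ - τ₁) / ((1 + z) * τ₂ * (1 + 1 / γ)) < 1)
    (hlt : lam < -Real.log (1 - (τ₂ - τ₁) / ((1 + z) * τ₂ * (1 + 1 / γ))))
    (F : ℝ → ℝ)
    (hF : F = fun p => K + (τ₂ - τ₁) * m * p -
      (1 - Real.exp (-lam)) * (1 + z) * τ₂ * m * (p - pbar)) :
    (1 - Real.exp (-lam)) * (1 + z) * τ₂ < τ₂ - τ₁ ∧
    StrictMono F ∧
    Filter.Tendsto F Filter.atTop Filter.atTop ∧
    ¬∃ p₀ : ℝ, ∀ p : ℝ, F p ≤ F p₀ := by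
  obtain ⟨hγ0, hγ1⟩ := hγ
  have hγinv : (1:ℝ) < 1 + 1/γ := by
    have : 0 < 1/γ := by positivity
    linarith
  set D := (1 + z) * τ₂ * (1 + 1/γ) with hD
  have hDpos : 0 < D := by positivity
  set r := (τ₂ - τ₁) / D with hr
  have hrpos : 0 < r := div_pos (by linarith) hDpos
  have h1r : 0 < 1 - r := by linarith [hfrac]
  -- from hlt : lam < -log(1-r), get exp(-lam) > 1 - r
  have hexp : 1 - r < Real.exp (-lam) := by
    have := Real.exp_lt_exp.2 (show Real.log (1-r) < -lam by linarith)
    rwa [Real.exp_log h1r] at this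
  have hrD : r * D = τ₂ - τ₁ := div_mul_cancel₀ _ (ne_of_gt hDpos)
  have key : (1 - Real.exp (-lam)) * (1 + z) * τ₂ < τ₂ - τ₁ := by
    have h1 : (1 - Real.exp (-lam)) * (1 + z) * τ₂ < r * ((1 + z) * τ₂) := by
      have hpz : 0 < (1 + z) * τ₂ := by positivity
      nlinarith
    have h2 : r * ((1 + z) * τ₂) < τ₂ - τ₁ := by
      have : r * ((1 + z) * τ₂) * (1 + 1/γ) = τ₂ - τ₁ := by
        rw [← hrD]; ring
      nlinarith [mul_pos hrpos (by positivity : (0:ℝ) < (1+z)*τ₂)]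
    linarith
  have hc : 0 < ((τ₂ - τ₁) - (1 - Real.exp (-lam)) * (1 + z) * τ₂) * m := by
    apply mul_pos (by linarith) hm
  set c := ((τ₂ - τ₁) - (1 - Real.exp (-lam)) * (1 + z) * τ₂) * m with hcdef
  have hFeq : ∀ p, F p = c * p + (K + (1 - Real.exp (-lam)) * (1 + z) * τ₂ * m * pbar) := by
    intro p; rw [hF]; ring
  have hmono : StrictMono F := by
    intro a b hab
    rw [hFeq a, hFeq b]
    have := mul_lt_mul_of_pos_left hab hc
    linarith
  refine ⟨key, hmono, ?_, ?_⟩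
  · have h1 : Filter.Tendsto (fun p : ℝ => c * p) Filter.atTop Filter.atTop :=
      Filter.Tendsto.const_mul_atTop hc Filter.tendsto_id
    have h2 := Filter.tendsto_atTop_add_const_right Filter.atTop
      (K + (1 - Real.exp (-lam)) * (1 + z) * τ₂ * m * pbar) h1
    refine h2.congr fun p => (hFeq p).symm
  · rintro ⟨p₀, hp₀⟩
    have := hmono (lt_add_one p₀)
    exact absurd (hp₀ (p₀ + 1)) (not_le.2 this)
end

section
/- In the high-transfer-price setting, regard the optimal transfer price as a function of the tax rate of the harmed country: P(t) := p̄ + ((t−τ₁)/((1−exp(−λ))·(1+z)·t·(1+1/γ)))^γ · (p^∨ − p̄) for t ∈ (τ₁, 1]. Then at each such t, P has derivative equal to [γ·(p^∨−p̄)/((1−exp(−λ))·(1+z)·(1+1/γ))^γ] · (t − (t−τ₁)) / (t^(1+γ)·(t−τ₁)^(1−γ)); moreover this derivative is strictly positive whenever τ₁ > 0, and equals zero for all t when τ₁ = 0. -/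
open Real Set Filter Topology

/-
With `u(t) = (t - τ₁) / (c t)` and `c = (1 - e^{-λ})(1 + z)(1 + 1/γ)`, the quotient rule gives
`u'(t) = τ₁ / (c t²)`, so the chain rule yields `(u^γ)' = γ u^{γ-1} τ₁ / (c t²)`, which
rearranges to `γ / c^γ · τ₁ / (t^{1+γ} (t - τ₁)^{1-γ})`. Its sign is that of `τ₁`.
-/

theorem hasDerivAt_sub_div_const_mul
    {s c t : ℝ} (hc : c ≠ 0) (ht : t ≠ 0) :
    HasDerivAt (fun x : ℝ => (x - s) / (c * x)) (s / (c * t ^ 2)) t := by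
  have hden : HasDerivAt (fun x : ℝ => c * x) c t := by
    simpa using (hasDerivAt_id' t).const_mul c
  refine (((hasDerivAt_id' t).sub_const s).div hden (by positivity)).congr_deriv ?_
  field_simp
  ring

theorem hasDerivAt_rpow_sub_div_const_mul
    {s c γ t : ℝ} (hc : 0 < c) (hst : s < t) (ht : 0 < t) :
    HasDerivAt (fun x : ℝ => ((x - s) / (c * x)) ^ γ)
      (γ / c ^ γ * (s / (t ^ (1 + γ) * (t - s) ^ (1 - γ)))) t := by
  have hts : 0 < t - s := sub_pos.mpr hst
  refine ((hasDerivAt_sub_div_const_mul (s := s) hc.ne' ht.ne').rpow_const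
    (p := γ) (Or.inl (by positivity))).congr_deriv ?_
  rw [rpow_sub (by positivity : 0 < (t - s) / (c * t)) γ 1, div_rpow hts.le (by positivity),
    mul_rpow hc.le ht.le, rpow_add ht, rpow_sub hts, rpow_one, rpow_one, rpow_one]
  have : (t - s) ^ γ ≠ 0 := by positivity
  have : t ^ γ ≠ 0 := by positivity
  have : c ^ γ ≠ 0 := by positivity
  field_simp

theorem one_sub_exp_neg_pos {x : ℝ} (hx : 0 < x) : 0 < 1 - exp (-x) := by
  simpa using exp_lt_one_iff.mpr (neg_lt_zero.mpr hx)

theorem stmt4_general (τ₁ lam z γ pbar pvee : ℝ)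
    (hτ₁ : 0 ≤ τ₁)
    (hlam : 0 < lam) (hz : 0 < z) (hγ : γ ∈ Set.Ioc (0 : ℝ) 1) (hp : pbar < pvee)
    (P : ℝ → ℝ)
    (hP : P = fun t => pbar +
      ((t - τ₁) / ((1 - Real.exp (-lam)) * (1 + z) * t * (1 + 1 / γ))) ^ γ * (pvee - pbar))
    (D : ℝ → ℝ)
    (hD : D = fun t => γ * (pvee - pbar) /
        ((1 - Real.exp (-lam)) * (1 + z) * (1 + 1 / γ)) ^ γ *
      ((t - (t - τ₁)) / (t ^ (1 + γ) * (t - τ₁) ^ (1 - γ)))) :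
    (∀ t ∈ Set.Ioc τ₁ 1, HasDerivAt P (D t) t) ∧
    (0 < τ₁ → ∀ t ∈ Set.Ioc τ₁ 1, 0 < D t) ∧
    (τ₁ = 0 → ∀ t ∈ Set.Ioc τ₁ 1, D t = 0) := by
  set c := (1 - exp (-lam)) * (1 + z) * (1 + 1 / γ)
  have hc : 0 < c := by
    have := one_sub_exp_neg_pos hlam
    have := hγ.1
    positivity
  have hP' : P = fun t => pbar + ((t - τ₁) / (c * t)) ^ γ * (pvee - pbar) := by
    rw [hP]; ext t; rw [mul_right_comm _ t]
  have hD' :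
      D = fun t => γ * (pvee - pbar) / c ^ γ * (τ₁ / (t ^ (1 + γ) * (t - τ₁) ^ (1 - γ))) := by
    rw [hD]; simp only [sub_sub_cancel]
  refine ⟨fun t ht => ?_, fun hτ₁pos t ht => ?_, fun hτ₁zero t _ => ?_⟩
  · have h := (hasDerivAt_rpow_sub_div_const_mul (γ := γ) hc ht.1 (hτ₁.trans_lt ht.1)).mul_const
      (pvee - pbar) |>.const_add pbar
    rw [hP', hD']
    exact h.congr_deriv (by ring)
  · have := hτ₁pos.trans ht.1
    have := sub_pos.mpr ht.1
    have := sub_pos.mpr hp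
    have := hγ.1
    rw [hD']
    positivity
  · simp [hD', hτ₁zero]

/-- In the high-transfer-price setting, the optimal transfer price viewed as a function
`P` of the harmed country's tax rate has, at each `t ∈ (τ₁,1]`, derivative
`[γ·(p^∨−p̄)/((1−exp(−λ))·(1+z)·(1+1/γ))^γ] · (t−(t−τ₁))/(t^(1+γ)·(t−τ₁)^(1−γ))`;
this derivative is strictly positive whenever `τ₁ > 0` and vanishes identically
when `τ₁ = 0`. -/
theorem stmt4 (τ₁ lam z γ pbar pvee : ℝ)
    (hτ₁ : 0 ≤ τ₁) (hτ₁' : τ₁ < 1)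
    (hlam : 0 < lam) (hz : 0 < z) (hγ : γ ∈ Set.Ioc (0 : ℝ) 1) (hp : pbar < pvee)
    (P : ℝ → ℝ)
    (hP : P = fun t => pbar +
      ((t - τ₁) / ((1 - Real.exp (-lam)) * (1 + z) * t * (1 + 1 / γ))) ^ γ * (pvee - pbar))
    (D : ℝ → ℝ)
    (hD : D = fun t => γ * (pvee - pbar) /
        ((1 - Real.exp (-lam)) * (1 + z) * (1 + 1 / γ)) ^ γ *
      ((t - (t - τ₁)) / (t ^ (1 + γ) * (t - τ₁) ^ (1 - γ)))) :
    (∀ t ∈ Set.Ioc τ₁ 1, HasDerivAt P (D t) t) ∧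
    (0 < τ₁ → ∀ t ∈ Set.Ioc τ₁ 1, 0 < D t) ∧
    (τ₁ = 0 → ∀ t ∈ Set.Ioc τ₁ 1, D t = 0) :=
  stmt4_general τ₁ lam z γ pbar pvee hτ₁ hlam hz hγ hp P hP D hD
end

section
/- In the high-transfer-price setting with τ₁ > 0, let Δp*(t) := ((t−τ₁)/((1−exp(−λ))·(1+z)·t·(1+1/γ)))^γ · (p^∨ − p̄) for t ∈ (τ₁,1]. Then the t-elasticity of the optimal price gap satisfies (dΔp*/dt)·(t/Δp*(t)) = γ·(t − (t−τ₁))/(t−τ₁) = γ·τ₁/(t−τ₁); in particular this elasticity equals 1 if and only if γ·(t − (t−τ₁)) = t−τ₁. -/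
/-! Raising to the power `γ` multiplies an elasticity by `γ` and constant factors leave it
unchanged, while `t ↦ (t - τ₁) / (c t)` has elasticity `τ₁ / (t - τ₁)`. -/

open Real

noncomputable def elasticity (f : ℝ → ℝ) (t : ℝ) : ℝ := deriv f t * (t / f t)

theorem elasticity_rpow_mul_const {f : ℝ → ℝ} {t : ℝ} (hf : DifferentiableAt ℝ f t)
    (hft : 0 < f t) (γ : ℝ) {K : ℝ} (hK : K ≠ 0) :
    elasticity (fun s => f s ^ γ * K) t = γ * elasticity f t := by
  have hderiv : deriv (fun s => f s ^ γ * K) t = deriv f t * γ * f t ^ (γ - 1) * K :=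
    ((hf.hasDerivAt.rpow_const (Or.inl hft.ne')).mul_const K).deriv
  have hpow : f t ^ γ ≠ 0 := (rpow_pos_of_pos hft γ).ne'
  simp only [elasticity, hderiv, rpow_sub_one hft.ne']
  field_simp

theorem elasticity_sub_div_const_mul {a c t : ℝ} (hc : c ≠ 0) (ht : t ≠ 0) (hta : t ≠ a) :
    elasticity (fun s => (s - a) / (c * s)) t = a / (t - a) := by
  have hct : c * t ≠ 0 := mul_ne_zero hc ht
  have hderiv : deriv (fun s => (s - a) / (c * s)) t
      = (1 * (c * t) - (t - a) * (c * 1)) / (c * t) ^ 2 :=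
    (((hasDerivAt_id t).sub_const a).div ((hasDerivAt_id t).const_mul c) hct).deriv
  have hsub : t - a ≠ 0 := sub_ne_zero.mpr hta
  simp only [elasticity, hderiv]
  field_simp
  ring

/-- In the high-transfer-price setting with `τ₁ > 0`, the `t`-elasticity of the optimal
price gap `Δp*(t)` equals `γ·(t−(t−τ₁))/(t−τ₁) = γ·τ₁/(t−τ₁)`, and it equals `1` iff
`γ·(t−(t−τ₁)) = t−τ₁`. -/
theorem stmt6 (τ₁ lam z γ pbar pvee : ℝ)
    (hτ₁ : τ₁ ∈ Set.Ioo (0 : ℝ) 1)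
    (hlam : 0 < lam) (hz : 0 < z) (hγ : γ ∈ Set.Ioc (0 : ℝ) 1) (hp : pbar < pvee)
    (Δp : ℝ → ℝ)
    (hΔp : Δp = fun t =>
      ((t - τ₁) / ((1 - Real.exp (-lam)) * (1 + z) * t * (1 + 1 / γ))) ^ γ * (pvee - pbar)) :
    ∀ t ∈ Set.Ioc τ₁ 1,
      deriv Δp t * (t / Δp t) = γ * ((t - (t - τ₁)) / (t - τ₁)) ∧
      γ * ((t - (t - τ₁)) / (t - τ₁)) = γ * τ₁ / (t - τ₁) ∧
      (deriv Δp t * (t / Δp t) = 1 ↔ γ * (t - (t - τ₁)) = t - τ₁) := by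
  rintro t ⟨hτt, -⟩
  set c := (1 - exp (-lam)) * (1 + z) * (1 + 1 / γ)
  have hc : 0 < c := by
    have : exp (-lam) < 1 := exp_lt_one_iff.mpr (neg_neg_of_pos hlam)
    have : 0 < 1 / γ := one_div_pos.mpr hγ.1
    unfold c; apply mul_pos (mul_pos _ _) <;> linarith
  have ht : 0 < t := hτ₁.1.trans hτt
  have hsub : 0 < t - τ₁ := sub_pos.mpr hτt
  have hΔp_eq : Δp = fun s => ((s - τ₁) / (c * s)) ^ γ * (pvee - pbar) := by
    rw [hΔp]; funext s; unfold c; ring_nf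
  have key : deriv Δp t * (t / Δp t) = γ * (τ₁ / (t - τ₁)) := by
    rw [← elasticity, hΔp_eq, elasticity_rpow_mul_const _ (by positivity) γ (sub_pos.mpr hp).ne',
      elasticity_sub_div_const_mul hc.ne' ht.ne' hτt.ne']
    fun_prop (disch := positivity)
  simp only [sub_sub_cancel, key, mul_div_assoc, true_and]
  rw [← mul_div_assoc, div_eq_one_iff_eq hsub.ne']
end

section
/- In the high-transfer-price setting with τ₁ > 0 and γ ∈ (0,1) strictly less than 1, the derivative of the optimal transfer price with respect to the harmed country's tax rate, P'(t) = [γ·(p^∨−p̄)/((1−exp(−λ))·(1+z)·(1+1/γ))^γ] · (t−(t−τ₁))/(t^(1+γ)·(t−τ₁)^(1−γ)), tends to +∞ as t → τ₁ from the right (i.e. as the tax differential tends to zero, the variation of the optimal price diverges in the profit-shifting direction). -/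
/-!
With `c = (1 - exp (-λ)) (1 + z) (1 + 1/γ)`, `P(t) = p̄ + (p^∨ - p̄) ((t - τ₁) / (c t))^γ`, and the
chain rule gives `P'(t) = γ (p^∨ - p̄) c^(-γ) τ₁ / (t^(1+γ) (t - τ₁)^(1-γ))`. Since `1 - γ > 0`, the
denominator tends to `0⁺` as `t → τ₁⁺`, so `P'(t) → +∞`.
-/

open Real Set Filter Topology

lemma hasDerivAt_rpow_sub_div_mul {a c t : ℝ} (γ : ℝ) (hc : 0 < c) (ht : 0 < t) (hat : a < t) :
    HasDerivAt (fun s => ((s - a) / (c * s)) ^ γ)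
      (γ / c ^ γ * (a / (t ^ (1 + γ) * (t - a) ^ (1 - γ)))) t := by
  have hx : 0 < t - a := sub_pos.mpr hat
  have hquot : HasDerivAt (fun s => (s - a) / (c * s)) (a / (c * t ^ 2)) t := by
    refine (((hasDerivAt_id' t).sub_const a).div ((hasDerivAt_id' t).const_mul c)
      (by positivity)).congr_deriv ?_
    field_simp
    ring
  refine (hquot.rpow_const (Or.inl (by positivity))).congr_deriv ?_
  rw [div_rpow hx.le (by positivity), mul_rpow hc.le ht.le, rpow_sub_one hx.ne',
    rpow_sub_one hc.ne', rpow_sub_one ht.ne', rpow_sub hx, rpow_add ht, rpow_one, rpow_one]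
  have hxγ := rpow_pos_of_pos hx γ
  have htγ := rpow_pos_of_pos ht γ
  have hcγ := rpow_pos_of_pos hc γ
  field_simp

lemma tendsto_rpow_mul_rpow_sub_nhdsGT {a : ℝ} (p : ℝ) {q : ℝ} (ha : 0 < a) (hq : 0 < q) :
    Tendsto (fun t => t ^ p * (t - a) ^ q) (𝓝[>] a) (𝓝[>] 0) := by
  refine tendsto_nhdsWithin_of_tendsto_nhds_of_eventually_within _ ?_ ?_
  · have hcont : ContinuousAt (fun t => t ^ p * (t - a) ^ q) a :=
      (continuousAt_id.rpow_const (Or.inl ha.ne')).mul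
        ((continuousAt_id.sub continuousAt_const).rpow_const (Or.inr hq.le))
    simpa [zero_rpow hq.ne'] using hcont.tendsto.mono_left nhdsWithin_le_nhds
  · filter_upwards [self_mem_nhdsWithin] with t (hat : a < t)
    exact mul_pos (rpow_pos_of_pos (ha.trans hat) p) (rpow_pos_of_pos (sub_pos.mpr hat) q)

lemma tendsto_div_rpow_mul_rpow_sub_atTop {a : ℝ} (p : ℝ) {q : ℝ} (ha : 0 < a) (hq : 0 < q) :
    Tendsto (fun t => a / (t ^ p * (t - a) ^ q)) (𝓝[>] a) atTop := by
  simpa only [div_eq_mul_inv, Pi.inv_apply] using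
    ((tendsto_rpow_mul_rpow_sub_nhdsGT p ha hq).inv_tendsto_nhdsGT_zero).const_mul_atTop ha

/-- In the high-transfer-price setting with `τ₁ > 0` and `γ ∈ (0,1)`, the derivative of
the optimal transfer price with respect to the harmed country's tax rate,
`P'(t) = [γ·(p^∨−p̄)/((1−exp(−λ))·(1+z)·(1+1/γ))^γ]·(t−(t−τ₁))/(t^(1+γ)·(t−τ₁)^(1−γ))`,
tends to `+∞` as `t → τ₁⁺`. -/
theorem stmt11 (τ₁ lam z γ pbar pvee : ℝ)
    (hτ₁ : τ₁ ∈ Set.Ioo (0 : ℝ) 1)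
    (hlam : 0 < lam) (hz : 0 < z) (hγ : γ ∈ Set.Ioo (0 : ℝ) 1) (hp : pbar < pvee)
    (P : ℝ → ℝ)
    (hP : P = fun t => pbar +
      ((t - τ₁) / ((1 - Real.exp (-lam)) * (1 + z) * t * (1 + 1 / γ))) ^ γ * (pvee - pbar))
    (D : ℝ → ℝ)
    (hD : D = fun t => γ * (pvee - pbar) /
        ((1 - Real.exp (-lam)) * (1 + z) * (1 + 1 / γ)) ^ γ *
      ((t - (t - τ₁)) / (t ^ (1 + γ) * (t - τ₁) ^ (1 - γ)))) :
    (∀ t ∈ Set.Ioc τ₁ 1, HasDerivAt P (D t) t) ∧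
    Filter.Tendsto D (nhdsWithin τ₁ (Set.Ioi τ₁)) Filter.atTop := by
  obtain ⟨hτ₁, -⟩ := hτ₁
  obtain ⟨hγ0, hγ1⟩ := hγ
  have hc : 0 < (1 - exp (-lam)) * (1 + z) * (1 + 1 / γ) := by
    have hexp : exp (-lam) < 1 := exp_lt_one_iff.mpr (neg_neg_of_pos hlam)
    have hE : 0 < 1 - exp (-lam) := by linarith
    positivity
  simp only [sub_sub_cancel] at hD
  subst hP hD
  constructor
  · rintro t ⟨hτ₁t, -⟩
    have hden (s : ℝ) : (1 - exp (-lam)) * (1 + z) * s * (1 + 1 / γ) =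
        (1 - exp (-lam)) * (1 + z) * (1 + 1 / γ) * s := mul_right_comm _ _ _
    simp only [hden]
    exact (((hasDerivAt_rpow_sub_div_mul γ hc (hτ₁.trans hτ₁t) hτ₁t).mul_const
      (pvee - pbar)).const_add pbar).congr_deriv (by ring)
  · have hK : 0 < γ * (pvee - pbar) / ((1 - exp (-lam)) * (1 + z) * (1 + 1 / γ)) ^ γ := by
      have hgap := sub_pos.mpr hp
      positivity
    exact (tendsto_div_rpow_mul_rpow_sub_atTop _ hτ₁ (sub_pos.mpr hγ1)).const_mul_atTop hK
end

section
/- Let Δτ > 0, τ > 0, z > 0 and real numbers p̄ ≠ p^c be fixed, and let f, g : (0,1] → (0,1] be functions such that f(x) → 0 and g(x) → 0 as x → 0⁺, and such that g(x)·(log g(x) − log f(x)) → 0 as x → 0⁺ (for instance if |log g(x) − log f(x)| stays bounded). Then the tax-enforcement-parametrised optimal transfer price p*(x) := p̄ + ( Δτ/( f(x)·(1+z)·τ·(1+1/g(x)) ) )^{g(x)} · (p^c − p̄) tends to p^c as x → 0⁺; i.e. at the weakest tax enforcement the optimal transfer price converges to the least tolerable arm's-length price p^c. -/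
/-!
With `c = Δτ / ((1 + z) τ)`, write `(c / (f (1 + 1/g)))^g = exp (g · log (c / (f (1 + 1/g))))`;
expanding the logarithm, the exponent is `g (log g − log f) + g log c − g log (g + 1)`. Each term tends to `0`, so the
power tends to `1` and `p*` tends to `p̄ + (p^c − p̄) = p^c`.
-/

open Real Set Filter Topology

theorem tendsto_rpow_of_tendsto_mul_log {α : Type*} {l : Filter α} {u g : α → ℝ} {a : ℝ}
    (hu : ∀ᶠ x in l, 0 < u x) (h : Tendsto (fun x => g x * log (u x)) l (𝓝 a)) :
    Tendsto (fun x => u x ^ g x) l (𝓝 (exp a)) := by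
  refine ((continuous_exp.tendsto a).comp h).congr' ?_
  filter_upwards [hu] with x hx
  rw [Function.comp_apply, rpow_def_of_pos hx, mul_comm]

theorem log_div_mul_one_add_inv {c a b : ℝ} (hc : 0 < c) (ha : 0 < a) (hb : 0 < b) :
    log (c / (a * (1 + 1 / b))) = (log b - log a) + log c - log (b + 1) := by
  have hb' : 1 + 1 / b = (b + 1) / b := by field_simp
  rw [hb', log_div hc.ne' (by positivity), log_mul ha.ne' (by positivity),
    log_div (by positivity) hb.ne']
  ring

theorem tendsto_mul_log_add_one {α : Type*} {l : Filter α} {g : α → ℝ}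
    (hg : Tendsto g l (𝓝 0)) : Tendsto (fun x => g x * log (g x + 1)) l (𝓝 0) := by
  have hlog : Tendsto (fun x => log (g x + 1)) l (𝓝 0) := by
    have hg1 : Tendsto (fun x => g x + 1) l (𝓝 1) := by simpa using hg.add_const 1
    simpa [Function.comp_def] using (continuousAt_log one_ne_zero).tendsto.comp hg1
  simpa using hg.mul hlog

theorem tendsto_rpow_div_mul_one_add_inv {α : Type*} {l : Filter α} {c : ℝ} (hc : 0 < c)
    {f g : α → ℝ} (hf : ∀ᶠ x in l, 0 < f x) (hg : ∀ᶠ x in l, 0 < g x)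
    (hg0 : Tendsto g l (𝓝 0)) (hlog : Tendsto (fun x => g x * (log (g x) - log (f x))) l (𝓝 0)) :
    Tendsto (fun x => (c / (f x * (1 + 1 / g x))) ^ g x) l (𝓝 1) := by
  have hexp : Tendsto (fun x => g x * (log (g x) - log (f x)) + g x * log c
      - g x * log (g x + 1)) l (𝓝 0) := by
    simpa using (hlog.add (hg0.mul_const (log c))).sub (tendsto_mul_log_add_one hg0)
  have hpos : ∀ᶠ x in l, 0 < c / (f x * (1 + 1 / g x)) := by
    filter_upwards [hf, hg] with x hfx hgx
    positivity
  have hexp' : Tendsto (fun x => g x * log (c / (f x * (1 + 1 / g x)))) l (𝓝 0) := by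
    refine hexp.congr' ?_
    filter_upwards [hf, hg] with x hfx hgx
    rw [log_div_mul_one_add_inv hc hfx hgx]
    ring
  simpa only [exp_zero] using tendsto_rpow_of_tendsto_mul_log hpos hexp'

theorem stmt12_general (Δτ τ z pbar pc : ℝ) (f g : ℝ → ℝ)
    (hΔτ : 0 < Δτ) (hτ : 0 < τ) (hz : 0 < z)
    (hfmem : ∀ x ∈ Set.Ioc (0 : ℝ) 1, f x ∈ Set.Ioc (0 : ℝ) 1)
    (hgmem : ∀ x ∈ Set.Ioc (0 : ℝ) 1, g x ∈ Set.Ioc (0 : ℝ) 1)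
    (hg0 : Filter.Tendsto g (nhdsWithin 0 (Set.Ioi 0)) (nhds 0))
    (hlog : Filter.Tendsto (fun x => g x * (Real.log (g x) - Real.log (f x)))
      (nhdsWithin 0 (Set.Ioi 0)) (nhds 0)) :
    Filter.Tendsto
      (fun x => pbar + (Δτ / (f x * (1 + z) * τ * (1 + 1 / g x))) ^ (g x) * (pc - pbar))
      (nhdsWithin 0 (Set.Ioi 0)) (nhds pc) := by
  have hIoc : ∀ᶠ x in 𝓝[>] (0 : ℝ), x ∈ Ioc 0 1 := Ioc_mem_nhdsGT zero_lt_one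
  have hpow := tendsto_rpow_div_mul_one_add_inv (c := Δτ / ((1 + z) * τ)) (by positivity)
    (hIoc.mono fun x hx => (hfmem x hx).1) (hIoc.mono fun x hx => (hgmem x hx).1) hg0 hlog
  have hbase : (fun x => (Δτ / ((1 + z) * τ) / (f x * (1 + 1 / g x))) ^ g x)
      = fun x => (Δτ / (f x * (1 + z) * τ * (1 + 1 / g x))) ^ g x := by
    funext x
    rw [div_div]
    ring_nf
  rw [hbase] at hpow
  simpa using (hpow.mul_const (pc - pbar)).const_add pbar

/-- At the weakest tax enforcement the optimal transfer price converges to the least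
tolerable arm's-length price `p^c`: if `f(x) → 0`, `g(x) → 0` and
`g(x)·(log g(x) − log f(x)) → 0` as `x → 0⁺`, then
`p*(x) = p̄ + (Δτ/(f(x)·(1+z)·τ·(1+1/g(x))))^{g(x)}·(p^c − p̄) → p^c`. -/
theorem stmt12 (Δτ τ z pbar pc : ℝ) (f g : ℝ → ℝ)
    (hΔτ : 0 < Δτ) (hτ : 0 < τ) (hz : 0 < z) (hne : pbar ≠ pc)
    (hfmem : ∀ x ∈ Set.Ioc (0 : ℝ) 1, f x ∈ Set.Ioc (0 : ℝ) 1)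
    (hgmem : ∀ x ∈ Set.Ioc (0 : ℝ) 1, g x ∈ Set.Ioc (0 : ℝ) 1)
    (hf0 : Filter.Tendsto f (nhdsWithin 0 (Set.Ioi 0)) (nhds 0))
    (hg0 : Filter.Tendsto g (nhdsWithin 0 (Set.Ioi 0)) (nhds 0))
    (hlog : Filter.Tendsto (fun x => g x * (Real.log (g x) - Real.log (f x)))
      (nhdsWithin 0 (Set.Ioi 0)) (nhds 0)) :
    Filter.Tendsto
      (fun x => pbar + (Δτ / (f x * (1 + z) * τ * (1 + 1 / g x))) ^ (g x) * (pc - pbar))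
      (nhdsWithin 0 (Set.Ioi 0)) (nhds pc) :=
  stmt12_general Δτ τ z pbar pc f g hΔτ hτ hz hfmem hgmem hg0 hlog
end

section
/- Let τ > 0, z > 0 and Δτ satisfy 0 < Δτ ≤ (1+z)·τ, and suppose f, g ∈ (0,1] satisfy the necessary condition f ≥ g/(1+g). Then Δτ ≤ f·(1+z)·τ·(1+1/g), hence ( Δτ/( f·(1+z)·τ·(1+1/g) ) )^{g} ≤ 1; i.e. under the necessary condition of Proposition 6 the optimal price gap does not exceed the full width |p^c − p̄| of the fuzzy arm's-length price. -/
lemma one_le_mul_one_add_one_div {f g : ℝ} (hg : 0 < g) (hfg : g / (1 + g) ≤ f) :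
    1 ≤ f * (1 + 1 / g) := by
  have hrewrite : f * (1 + 1 / g) = f * (1 + g) / g := by field_simp; ring
  rw [hrewrite, one_le_div hg, ← div_le_iff₀ (by linarith)]
  exact hfg

lemma rpow_div_le_one {x y p : ℝ} (hx : 0 ≤ x) (hxy : x ≤ y) (hp : 0 ≤ p) :
    (x / y) ^ p ≤ 1 :=
  Real.rpow_le_one (div_nonneg hx (hx.trans hxy)) (div_le_one_of_le₀ hxy (hx.trans hxy)) hp

theorem stmt17_general (Δτ τ z f g : ℝ)
    (hΔτ : 0 < Δτ) (hΔτ' : Δτ ≤ (1 + z) * τ)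
    (hg : g ∈ Set.Ioc (0 : ℝ) 1)
    (hfg : f ≥ g / (1 + g)) :
    Δτ ≤ f * (1 + z) * τ * (1 + 1 / g) ∧
    (Δτ / (f * (1 + z) * τ * (1 + 1 / g))) ^ g ≤ 1 := by
  have hbound : Δτ ≤ f * (1 + z) * τ * (1 + 1 / g) := calc
    Δτ ≤ (1 + z) * τ := hΔτ'
    _ ≤ (1 + z) * τ * (f * (1 + 1 / g)) :=
      le_mul_of_one_le_right (by linarith) (one_le_mul_one_add_one_div hg.1 hfg)
    _ = f * (1 + z) * τ * (1 + 1 / g) := by ring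
  exact ⟨hbound, rpow_div_le_one hΔτ.le hbound hg.1.le⟩

/-- If `0 < Δτ ≤ (1+z)·τ` and `f, g ∈ (0,1]` satisfy the necessary condition
`f ≥ g/(1+g)`, then `Δτ ≤ f·(1+z)·τ·(1+1/g)` and hence the maximising share
`(Δτ/(f·(1+z)·τ·(1+1/g)))^g` is at most `1`. -/
theorem stmt17 (Δτ τ z f g : ℝ)
    (hΔτ : 0 < Δτ) (hΔτ' : Δτ ≤ (1 + z) * τ) (hτ : 0 < τ) (hz : 0 < z)
    (hf : f ∈ Set.Ioc (0 : ℝ) 1) (hg : g ∈ Set.Ioc (0 : ℝ) 1)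
    (hfg : f ≥ g / (1 + g)) :
    Δτ ≤ f * (1 + z) * τ * (1 + 1 / g) ∧
    (Δτ / (f * (1 + z) * τ * (1 + 1 / g))) ^ g ≤ 1 :=
  stmt17_general Δτ τ z f g hΔτ hΔτ' hg hfg
end
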